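/- arXiv:2205.03487 — 2 statements merged into one kernel-verified Lean document; each statement's English description precedes it below -/
import Mathlib

section
/- Let D=(E,𝓕) be a normal delta-matroid whose twist polynomial is a monomial, i.e., there exists k with w(D*A)=k for all A⊆E. Then there do not exist distinct elements e,f∈E such that the restriction D|_{{e,f}} has feasible set collection exactly {∅,{e},{e,f}}. -/
open Finset
open scoped symmDiff

noncomputable section

namespace DeltaMatroid

variable {α : Type*} [DecidableEq α]

/-- A delta-matroid on ground set `E` with feasible sets `F`: `F` is nonempty, consists of
subsets of `E`, and satisfies the symmetric exchange axiom. -/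
def IsDeltaMatroid (E : Finset α) (F : Finset (Finset α)) : Prop :=
  F.Nonempty ∧ (∀ X ∈ F, X ⊆ E) ∧
    ∀ X ∈ F, ∀ Y ∈ F, ∀ u ∈ X ∆ Y, ∃ v ∈ X ∆ Y, X ∆ ({u, v} : Finset α) ∈ F

/-- The twist `D * A` of the feasible sets by a subset `A`. -/
def twist (F : Finset (Finset α)) (A : Finset α) : Finset (Finset α) :=
  F.image fun X => A ∆ X

/-- Maximum cardinality of a feasible set. -/
def maxCard (F : Finset (Finset α)) : ℕ := F.sup Finset.card

/-- Minimum cardinality of a feasible set. -/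
def minCard (F : Finset (Finset α)) : ℕ := sInf (Finset.card '' (F : Set (Finset α)))

/-- The width `w(D)`. -/
def width (F : Finset (Finset α)) : ℕ := maxCard F - minCard F

/-- Feasible sets of minimum cardinality. -/
def Fmin (F : Finset (Finset α)) : Finset (Finset α) := F.filter fun X => X.card = minCard F

/-- Feasible sets of maximum cardinality. -/
def Fmax (F : Finset (Finset α)) : Finset (Finset α) := F.filter fun X => X.card = maxCard F

/-- `e` is a ribbon loop: it lies in no minimum-cardinality feasible set. -/
def IsRibbonLoop (F : Finset (Finset α)) (e : α) : Prop := ∀ X ∈ Fmin F, e ∉ X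

/-- A ribbon loop is non-orientable if it is also a ribbon loop of `D * e`. -/
def IsNonorientableRibbonLoop (F : Finset (Finset α)) (e : α) : Prop :=
  IsRibbonLoop F e ∧ IsRibbonLoop (twist F {e}) e

/-- A ribbon loop is orientable if it is not a ribbon loop of `D * e`. -/
def IsOrientableRibbonLoop (F : Finset (Finset α)) (e : α) : Prop :=
  IsRibbonLoop F e ∧ ¬ IsRibbonLoop (twist F {e}) e

/-- `e` is a loop: it lies in no feasible set. -/
def IsLoop (F : Finset (Finset α)) (e : α) : Prop := ∀ X ∈ F, e ∉ X

/-- `e` is a coloop: it lies in every feasible set. -/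
def IsColoop (F : Finset (Finset α)) (e : α) : Prop := ∀ X ∈ F, e ∈ X

/-- Contraction `D / e`. -/
def contract (F : Finset (Finset α)) (e : α) : Finset (Finset α) :=
  if ∀ X ∈ F, e ∉ X then F
  else (F.filter fun X => e ∈ X).image fun X => X.erase e

/-- Deletion `D \ e`. -/
def delete (F : Finset (Finset α)) (e : α) : Finset (Finset α) :=
  if ∀ X ∈ F, e ∈ X then F.image fun X => X.erase e
  else F.filter fun X => e ∉ X

/-- Deletion of every element of `A` (in some order; the order does not matter). -/
def deleteSet (F : Finset (Finset α)) (A : Finset α) : Finset (Finset α) :=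
  A.toList.foldl delete F

/-- The restriction `D |_A = D \ (E \ A)` of a delta-matroid with ground set `E`. -/
def restrict (F : Finset (Finset α)) (E A : Finset α) : Finset (Finset α) :=
  deleteSet F (E \ A)

/-- Feasible sets of the direct sum `D ⊕ D'`. -/
def directSum (F G : Finset (Finset α)) : Finset (Finset α) :=
  (F ×ˢ G).image fun p => p.1 ∪ p.2

/-- A delta-matroid is connected if it is not a direct sum of two delta-matroids on
nonempty ground sets. -/
def IsConnected (E : Finset α) (F : Finset (Finset α)) : Prop :=
  ¬ ∃ (E₁ E₂ : Finset α) (F₁ F₂ : Finset (Finset α)),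
      E₁.Nonempty ∧ E₂.Nonempty ∧ Disjoint E₁ E₂ ∧ E = E₁ ∪ E₂ ∧
      IsDeltaMatroid E₁ F₁ ∧ IsDeltaMatroid E₂ F₂ ∧ F = directSum F₁ F₂

/-- A delta-matroid is even if all feasible sets have the same parity of cardinality. -/
def IsEvenDM (F : Finset (Finset α)) : Prop :=
  ∀ X ∈ F, ∀ Y ∈ F, X.card % 2 = Y.card % 2

variable {ι : Type*} [Fintype ι] [DecidableEq ι]

/-- The feasible sets of `D(C)`: subsets `A` whose principal submatrix `C[A]` is nonsingular
(over `GF(2)`, i.e. has nonzero determinant); `C[∅]` is nonsingular by convention. -/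
def binaryFeasible (C : Matrix ι ι (ZMod 2)) : Finset (Finset ι) :=
  Finset.univ.filter fun A =>
    (C.submatrix (fun x : {a // a ∈ A} => (x : ι)) (fun x : {a // a ∈ A} => (x : ι))).det ≠ 0

/-- The (simple-graph part of the) intersection graph `G_D` of a normal binary delta-matroid
`D(C)`: distinct `u, v` adjacent iff `C u v = 1`.  Loops are recorded by the diagonal of `C`. -/
def interGraph (C : Matrix ι ι (ZMod 2)) : SimpleGraph ι :=
  SimpleGraph.fromRel fun u v => C u v = 1


private lemma sd_not_mem (X : Finset α) {a : α} (h : a ∉ X) :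
    X ∆ ({a} : Finset α) = insert a X := by
  ext b
  rcases eq_or_ne b a with rfl | hb
  · simp [Finset.mem_symmDiff, h]
  · simp [Finset.mem_symmDiff, hb]

private lemma sd_mem (X : Finset α) {a : α} (h : a ∈ X) :
    X ∆ ({a} : Finset α) = X.erase a := by
  ext b
  rcases eq_or_ne b a with rfl | hb
  · simp [Finset.mem_symmDiff, h]
  · simp [Finset.mem_symmDiff, hb]

private lemma sd_pair' (X : Finset α) {x v : α} (h : v ≠ x) :
    X ∆ ({x, v} : Finset α) = (X ∆ {x}) ∆ {v} := by
  have h1 : ({x, v} : Finset α) = ({x} : Finset α) ∆ {v} := by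
    rw [sd_not_mem ({x} : Finset α) (by simp [h]), Finset.pair_comm]
  rw [h1, symmDiff_assoc]

private lemma minCard_eq_zero' {F : Finset (Finset α)} (h : ∅ ∈ F) : minCard F = 0 :=
  Nat.sInf_eq_zero.mpr (Or.inl ⟨∅, Finset.mem_coe.mpr h, Finset.card_empty⟩)

private lemma minCard_le' {F : Finset (Finset α)} {X : Finset α} (h : X ∈ F) :
    minCard F ≤ X.card :=
  Nat.sInf_le ⟨X, Finset.mem_coe.mpr h, rfl⟩

private lemma le_maxCard' {F : Finset (Finset α)} {X : Finset α} (h : X ∈ F) :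
    X.card ≤ maxCard F :=
  Finset.le_sup h

private lemma empty_symmDiff' (X : Finset α) : (∅ : Finset α) ∆ X = X := by
  rw [← Finset.bot_eq_empty]; exact bot_symmDiff X

private lemma symmDiff_self' (X : Finset α) : X ∆ X = (∅ : Finset α) := by
  rw [← Finset.bot_eq_empty]; exact symmDiff_self X


/-- If the twist polynomial of a normal delta-matroid `D` is a monomial, then there are no
distinct `e, f ∈ E` with `D |_{e,f}` having feasible sets exactly `{∅, {e}, {e,f}}`. -/
theorem no_restriction_mixed (E : Finset α) (F : Finset (Finset α))
    (hD : IsDeltaMatroid E F) (hnorm : ∅ ∈ F)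
    (hmono : ∃ k : ℕ, ∀ A ⊆ E, width (twist F A) = k) :
    ¬ ∃ e ∈ E, ∃ f ∈ E, e ≠ f ∧
        restrict F E {e, f} = ({∅, {e}, {e, f}} : Finset (Finset α)) := by
  obtain ⟨k, hk⟩ := hmono
  rintro ⟨e, he, f, hf, hef, hrest⟩
  -- Step 1: reduce the restriction to a filter
  have hdel : ∀ (l : List α) (G : Finset (Finset α)), ∅ ∈ G →
      l.foldl delete G = G.filter (fun X => ∀ a ∈ l, a ∉ X) := by
    intro l
    induction l with
    | nil =>
        intro G hG
        simp only [List.foldl]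
        exact (Finset.filter_true_of_mem (by simp)).symm
    | cons a t ih =>
        intro G hG
        have hcond : ¬ ∀ X ∈ G, a ∈ X := fun h =>
          absurd (h ∅ hG) (Finset.notMem_empty a)
        have hda : delete G a = G.filter (fun X => a ∉ X) := by
          rw [delete, if_neg hcond]
        rw [List.foldl_cons, hda, ih _ (Finset.mem_filter.mpr ⟨hG, by simp⟩),
          Finset.filter_filter]
        apply Finset.filter_congr
        intro X _
        simp [List.forall_mem_cons]
  have hres : restrict F E {e, f} = F.filter (fun X => ∀ a ∈ E \ {e, f}, a ∉ X) := by
    rw [restrict, deleteSet, hdel _ _ hnorm]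
    apply Finset.filter_congr
    intro X _
    simp [Finset.mem_toList]
  -- memberships
  have heF : ({e} : Finset α) ∈ F := by
    have h1 : ({e} : Finset α) ∈ restrict F E {e, f} := by rw [hrest]; simp
    rw [hres] at h1
    exact (Finset.mem_filter.mp h1).1
  have hefF : ({e, f} : Finset α) ∈ F := by
    have h1 : ({e, f} : Finset α) ∈ restrict F E {e, f} := by rw [hrest]; simp
    rw [hres] at h1
    exact (Finset.mem_filter.mp h1).1
  have hfF : ({f} : Finset α) ∉ F := by
    intro hmem
    have h1 : ({f} : Finset α) ∈ restrict F E {e, f} := by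
      rw [hres]
      refine Finset.mem_filter.mpr ⟨hmem, ?_⟩
      intro a ha
      simp only [Finset.mem_sdiff, Finset.mem_insert, Finset.mem_singleton] at ha
      simp only [Finset.mem_singleton]
      intro hafeq
      exact ha.2 (Or.inr hafeq)
    rw [hrest] at h1
    simp only [Finset.mem_insert, Finset.mem_singleton] at h1
    rcases h1 with h1 | h1 | h1
    · exact absurd (h1 ▸ Finset.mem_singleton_self f) (Finset.notMem_empty f)
    · exact hef (Finset.singleton_injective h1).symm
    · have : e ∈ ({f} : Finset α) := h1 ▸ Finset.mem_insert_self e {f}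
      exact hef (Finset.mem_singleton.mp this)
  -- basic width facts
  have htw0 : twist F ∅ = F := by
    unfold twist
    ext X
    simp [empty_symmDiff']
  have hw0 : width F = k := by
    have := hk ∅ (Finset.empty_subset E)
    rwa [htw0] at this
  have hmaxF : maxCard F = k := by
    have h1 := hw0
    unfold width at h1
    rw [minCard_eq_zero' hnorm] at h1
    omega
  have hcard_le : ∀ X ∈ F, X.card ≤ k := fun X hX => hmaxF ▸ le_maxCard' hX
  -- generic bound: twisting by a feasible set
  have hbound : ∀ A : Finset α, A ⊆ E → A ∈ F → ∀ X ∈ F, (A ∆ X).card ≤ k := by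
    intro A hAE hAF X hX
    have hmem : A ∆ X ∈ twist F A := Finset.mem_image.mpr ⟨X, hX, rfl⟩
    have hmin : minCard (twist F A) = 0 :=
      minCard_eq_zero' (Finset.mem_image.mpr ⟨A, hAF, symmDiff_self' A⟩)
    have hmax : maxCard (twist F A) = k := by
      have h1 := hk A hAE
      unfold width at h1
      rw [hmin] at h1
      omega
    exact hmax ▸ le_maxCard' hmem
  have heE : ({e} : Finset α) ⊆ E := Finset.singleton_subset_iff.mpr he
  have hfE : ({f} : Finset α) ⊆ E := Finset.singleton_subset_iff.mpr hf
  have hefE : ({e, f} : Finset α) ⊆ E :=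
    Finset.insert_subset he (Finset.singleton_subset_iff.mpr hf)
  have hbe : ∀ X ∈ F, (({e} : Finset α) ∆ X).card ≤ k := hbound {e} heE heF
  have hbef : ∀ X ∈ F, (({e, f} : Finset α) ∆ X).card ≤ k := hbound {e, f} hefE hefF
  have hk2 : 2 ≤ k := by
    have h2 := hcard_le _ hefF
    have h3 : ({e, f} : Finset α).card = 2 := by
      rw [Finset.card_insert_of_notMem (by simp [hef]), Finset.card_singleton]
    omega
  -- attainment of maxCard on twists
  have hattain : ∀ A : Finset α, ∃ X ∈ F, (A ∆ X).card = maxCard (twist F A) := by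
    intro A
    obtain ⟨Z, hZ, hZeq⟩ := Finset.exists_mem_eq_sup (twist F A)
      ⟨A ∆ ∅, Finset.mem_image.mpr ⟨∅, hnorm, rfl⟩⟩ Finset.card
    obtain ⟨X, hX, rfl⟩ := Finset.mem_image.mp hZ
    exact ⟨X, hX, hZeq.symm⟩
  -- the maximum feasible set M avoiding f
  have hfmem : ({f} : Finset α) ∆ ∅ ∈ twist F {f} := Finset.mem_image.mpr ⟨∅, hnorm, rfl⟩
  have hminf : minCard (twist F {f}) = 1 := by
    apply le_antisymm
    · have : (({f} : Finset α) ∆ ∅).card = 1 := by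
        have hsd0 : ({f} : Finset α) ∆ ∅ = {f} := by
          ext b; simp [Finset.mem_symmDiff]
        rw [hsd0, Finset.card_singleton]
      exact this ▸ minCard_le' hfmem
    · rcases Nat.eq_zero_or_pos (minCard (twist F {f})) with h0 | h1
      · exfalso
        rcases Nat.sInf_eq_zero.mp h0 with hmem | hemp
        · obtain ⟨Z, hZc, hZ0⟩ := hmem
          obtain ⟨X, hX, rfl⟩ := Finset.mem_image.mp (Finset.mem_coe.mp hZc)
          have hXf : ({f} : Finset α) = X := by
            have hempty : ({f} : Finset α) ∆ X = ⊥ := by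
              rw [Finset.bot_eq_empty]
              exact Finset.card_eq_zero.mp hZ0
            exact symmDiff_eq_bot.mp hempty
          exact hfF (hXf ▸ hX)
        · exact absurd hemp (Set.Nonempty.ne_empty ⟨_, Set.mem_image_of_mem _ (Finset.mem_coe.mpr hfmem)⟩)
      · omega
  have hmaxf : maxCard (twist F {f}) = k + 1 := by
    have hw := hk {f} hfE
    unfold width at hw
    have hle : minCard (twist F {f}) ≤ maxCard (twist F {f}) :=
      le_trans (minCard_le' hfmem) (le_maxCard' hfmem)
    omega
  obtain ⟨M, hMF, hMc⟩ := hattain {f}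
  rw [hmaxf] at hMc
  have hMk : f ∉ M ∧ M.card = k := by
    by_cases hfm : f ∈ M
    · exfalso
      rw [symmDiff_comm, sd_mem M hfm, Finset.card_erase_of_mem hfm] at hMc
      have := hcard_le M hMF
      omega
    · rw [symmDiff_comm, sd_not_mem M hfm, Finset.card_insert_of_notMem hfm] at hMc
      exact ⟨hfm, by omega⟩
  have hfM : f ∉ M := hMk.1
  have hMcard : M.card = k := hMk.2
  have heM : e ∈ M := by
    by_contra hem
    have h1 := hbef M hMF
    have h2 : ({e, f} : Finset α) ∆ M = insert f (insert e M) := by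
      rw [symmDiff_comm, sd_pair' M (Ne.symm hef), sd_not_mem M hem,
        sd_not_mem _ (by simp [hfM, Ne.symm hef])]
    rw [h2, Finset.card_insert_of_notMem (by simp [hfM, Ne.symm hef]),
      Finset.card_insert_of_notMem hem] at h1
    omega
  -- the feasible set P0 with card k-1, no e, yes f
  have hmaxe : maxCard (twist F {e}) = k := by
    have h1 := hk {e} heE
    unfold width at h1
    have hmin0 : minCard (twist F {e}) = 0 :=
      minCard_eq_zero' (Finset.mem_image.mpr ⟨{e}, heF, symmDiff_self' {e}⟩)
    rw [hmin0] at h1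
    omega
  obtain ⟨P0, hP0F, hP0c⟩ := hattain {e}
  rw [hmaxe] at hP0c
  have hP0k : e ∉ P0 ∧ P0.card + 1 = k := by
    by_cases hep : e ∈ P0
    · exfalso
      rw [symmDiff_comm, sd_mem P0 hep, Finset.card_erase_of_mem hep] at hP0c
      have := hcard_le P0 hP0F
      omega
    · rw [symmDiff_comm, sd_not_mem P0 hep, Finset.card_insert_of_notMem hep] at hP0c
      exact ⟨hep, hP0c⟩
  have hfP0 : f ∈ P0 := by
    by_contra hfp
    have h1 := hbef P0 hP0F
    have h2 : ({e, f} : Finset α) ∆ P0 = insert f (insert e P0) := by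
      rw [symmDiff_comm, sd_pair' P0 (Ne.symm hef), sd_not_mem P0 hP0k.1,
        sd_not_mem _ (by simp [hfp, Ne.symm hef])]
    rw [h2, Finset.card_insert_of_notMem (by simp [hfp, Ne.symm hef]),
      Finset.card_insert_of_notMem hP0k.1] at h1
    omega
  -- descent
  have hexch := hD.2.2
  have main : ∀ n : ℕ, ∀ P : Finset α, P ∈ F → P.card + 1 = k → e ∉ P → f ∈ P →
      (M ∆ P).card = n → False := by
    intro n
    induction n using Nat.strong_induction_on with
    | _ n ih =>
      intro P hPF hPc hPe hPf hMPn
      obtain ⟨x, hxM, hxP, hxe⟩ : ∃ x, x ∈ M ∧ x ∉ P ∧ x ≠ e := by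
        by_contra hco
        push_neg at hco
        have hsub : M ⊆ insert e P := by
          intro y hy
          by_cases hyP : y ∈ P
          · exact Finset.mem_insert_of_mem hyP
          · rw [hco y hy hyP]; exact Finset.mem_insert_self e P
        have hMeq : M = insert e P :=
          Finset.eq_of_subset_of_card_le hsub
            (by rw [Finset.card_insert_of_notMem hPe]; omega)
        have : f ∈ M := hMeq ▸ Finset.mem_insert_of_mem hPf
        exact hfM this
      have hfx : f ≠ x := fun h => hfM (h ▸ hxM)
      have hxPM : x ∈ P ∆ M := Finset.mem_symmDiff.mpr (Or.inr ⟨hxM, hxP⟩)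
      obtain ⟨v, hv, hRF⟩ := hexch P hPF M hMF x hxPM
      rcases eq_or_ne v x with rfl | hvx
      · -- v = x : contradiction via hbe
        have hpair : ({v, v} : Finset α) = {v} := by simp
        rw [hpair, sd_not_mem P hxP] at hRF
        have h1 := hbe _ hRF
        have hens : e ∉ insert v P := by simp [hPe, Ne.symm hxe]
        rw [symmDiff_comm, sd_not_mem _ hens, Finset.card_insert_of_notMem hens,
          Finset.card_insert_of_notMem hxP] at h1
        omega
      · rw [sd_pair' P hvx, sd_not_mem P hxP] at hRF
        by_cases hvP : v ∈ P
        · have hvM : v ∉ M := by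
            rcases Finset.mem_symmDiff.mp hv with ⟨_, h⟩ | ⟨_, habs⟩
            · exact h
            · exact absurd hvP habs
          have hvins : v ∈ insert x P := Finset.mem_insert_of_mem hvP
          rw [sd_mem _ hvins] at hRF
          rcases eq_or_ne v f with rfl | hvf
          · -- v = f : contradiction via hbef
            have h1 := hbef _ hRF
            have hRe : e ∉ (insert x P).erase v := by
              simp [hPe, Ne.symm hxe]
            have hRf : v ∉ (insert x P).erase v := Finset.notMem_erase v _
            have h2 : ({e, v} : Finset α) ∆ ((insert x P).erase v) =
                insert v (insert e ((insert x P).erase v)) := by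
              rw [symmDiff_comm, sd_pair' _ (Ne.symm hef), sd_not_mem _ hRe,
                sd_not_mem _ (by simp [hRf, Ne.symm hef])]
            rw [h2, Finset.card_insert_of_notMem (by simp [hRf, Ne.symm hef]),
              Finset.card_insert_of_notMem hRe, Finset.card_erase_of_mem hvins,
              Finset.card_insert_of_notMem hxP] at h1
            omega
          · -- recurse
            have hRcard : ((insert x P).erase v).card + 1 = k := by
              rw [Finset.card_erase_of_mem hvins, Finset.card_insert_of_notMem hxP]
              omega
            have hRe : e ∉ (insert x P).erase v := by
              simp [hPe, Ne.symm hxe]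
            have hRf : f ∈ (insert x P).erase v :=
              Finset.mem_erase.mpr ⟨fun h => hvf h.symm, Finset.mem_insert_of_mem hPf⟩
            have hxMP : x ∈ M ∆ P := Finset.mem_symmDiff.mpr (Or.inl ⟨hxM, hxP⟩)
            have hvMP : v ∈ M ∆ P := Finset.mem_symmDiff.mpr (Or.inr ⟨hvP, hvM⟩)
            have hsd : M ∆ ((insert x P).erase v) = ((M ∆ P).erase x).erase v := by
              ext a
              by_cases hav : a = v
              · subst hav
                simp [Finset.mem_symmDiff, Finset.mem_erase, Finset.mem_insert, hvM, hvP]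
              · by_cases hax : a = x
                · subst hax
                  simp [Finset.mem_symmDiff, Finset.mem_erase, Finset.mem_insert,
                    hxM, hxP, hav]
                · by_cases haP : a ∈ P <;> by_cases haM : a ∈ M <;>
                    simp [Finset.mem_symmDiff, Finset.mem_erase, Finset.mem_insert,
                      hav, hax, haP, haM]
            have hvMPx : v ∈ (M ∆ P).erase x := Finset.mem_erase.mpr ⟨hvx, hvMP⟩
            have hcard2 : (M ∆ ((insert x P).erase v)).card = n - 2 := by
              rw [hsd, Finset.card_erase_of_mem hvMPx, Finset.card_erase_of_mem hxMP, hMPn]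
              omega
            have hn : 0 < n := hMPn ▸ Finset.card_pos.mpr ⟨x, hxMP⟩
            exact ih (n - 2) (by omega) _ hRF hRcard hRe hRf hcard2
        · -- v ∉ P : card k+1 contradiction
          have hvins : v ∉ insert x P := by simp [hvx, hvP]
          rw [sd_not_mem _ hvins] at hRF
          have h1 := hcard_le _ hRF
          rw [Finset.card_insert_of_notMem hvins, Finset.card_insert_of_notMem hxP] at h1
          omega
  exact main _ P0 hP0F hP0k.2 hP0k.1 hfP0 rfl


end DeltaMatroid

end
end

section
/- Let D=(E,𝓕) be a delta-matroid whose minimum feasible-set cardinality is r, and suppose e∈E is a non-orientable ribbon loop of D. Then for F⊆E∖{e}: F is a feasible set of D of cardinality r (i.e., a basis of the lower matroid D_min) if and only if F∪{e} is a feasible set of D of cardinality r+1. -/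
open Finset
open scoped symmDiff

noncomputable section

namespace DeltaMatroid

variable {α : Type*} [DecidableEq α]

variable {ι : Type*} [Fintype ι] [DecidableEq ι]

/-- The symmetric exchange axiom alone. -/
def Exch (F : Finset (Finset α)) : Prop :=
  ∀ X ∈ F, ∀ Y ∈ F, ∀ u ∈ X ∆ Y, ∃ v ∈ X ∆ Y, X ∆ ({u, v} : Finset α) ∈ F

lemma minCard_le {F : Finset (Finset α)} {W : Finset α} (hW : W ∈ F) :
    minCard F ≤ W.card :=
  Nat.sInf_le ⟨W, by simpa using hW, rfl⟩

lemma mem_Fmin {F : Finset (Finset α)} {W : Finset α} :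
    W ∈ Fmin F ↔ W ∈ F ∧ W.card = minCard F := by
  simp [Fmin]

lemma exists_minCard {F : Finset (Finset α)} (hF : F.Nonempty) :
    ∃ M ∈ F, M.card = minCard F := by
  have hne : (Finset.card '' (F : Set (Finset α))).Nonempty := by
    obtain ⟨M, hM⟩ := hF
    exact ⟨M.card, ⟨M, by simpa using hM, rfl⟩⟩
  obtain ⟨M, hM, hMc⟩ := Nat.sInf_mem hne
  exact ⟨M, by simpa using hM, hMc⟩

lemma card_ge_of_ribbonLoop {F : Finset (Finset α)} {e : α} (hrl : IsRibbonLoop F e)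
    {W : Finset α} (hW : W ∈ F) (heW : e ∈ W) : minCard F + 1 ≤ W.card := by
  have h1 := minCard_le hW
  rcases eq_or_lt_of_le h1 with h2 | h2
  · exact absurd heW (hrl W (mem_Fmin.mpr ⟨hW, h2.symm⟩))
  · omega

lemma mem_twist {F : Finset (Finset α)} {A W : Finset α} :
    W ∈ twist F A ↔ ∃ Z ∈ F, A ∆ Z = W := by
  simp [twist]

lemma exch_twist {F : Finset (Finset α)} (h : Exch F) (A : Finset α) :
    Exch (twist F A) := by
  intro X hX Y hY u hu
  obtain ⟨X₀, hX₀, rfl⟩ := mem_twist.mp hX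
  obtain ⟨Y₀, hY₀, rfl⟩ := mem_twist.mp hY
  have h1 : (A ∆ X₀) ∆ (A ∆ Y₀) = X₀ ∆ Y₀ := by
    ext a; simp only [Finset.mem_symmDiff]; tauto
  rw [h1] at hu
  obtain ⟨v, hv, hvF⟩ := h X₀ hX₀ Y₀ hY₀ u hu
  refine ⟨v, h1 ▸ hv, ?_⟩
  rw [symmDiff_assoc]
  exact mem_twist.mpr ⟨X₀ ∆ ({u, v} : Finset α), hvF, rfl⟩

/-- Key lemma: if `e` is a ribbon loop, `X` a minimum feasible set not containing `e`,
and some feasible `Y` contains `e` with `|Y| = minCard + 1`, then `insert e X` is feasible. -/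
lemma insert_mem_of_min {F : Finset (Finset α)} (hex : Exch F) {e : α}
    (hrl : IsRibbonLoop F e) {X : Finset α} (hX : X ∈ F) (hXc : X.card = minCard F)
    (heX : e ∉ X) :
    ∀ n : ℕ, ∀ Y ∈ F, e ∈ Y → Y.card = minCard F + 1 → (Y \ X).card ≤ n →
      insert e X ∈ F := by
  intro n
  induction n with
  | zero =>
    intro Y hY heY hYc hn
    have : e ∈ Y \ X := Finset.mem_sdiff.mpr ⟨heY, heX⟩
    have := Finset.card_pos.mpr ⟨e, this⟩
    omega
  | succ n ih =>
    intro Y hY heY hYc hn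
    by_cases hsub : Y \ X ⊆ {e}
    · -- then Y = insert e X
      have heYX : e ∈ Y \ X := Finset.mem_sdiff.mpr ⟨heY, heX⟩
      have hYXe : Y \ X = {e} :=
        Finset.Subset.antisymm hsub (Finset.singleton_subset_iff.mpr heYX)
      have hXsub : X ⊆ Y := by
        have hIX : Y ∩ X ⊆ X := Finset.inter_subset_right
        have hYsplit : (Y \ X).card + (Y ∩ X).card = Y.card :=
          Finset.card_sdiff_add_card_inter Y X
        have hcard : (Y ∩ X).card = X.card := by
          rw [hYXe] at hYsplit; simp at hYsplit; omega
        have h3 : Y ∩ X = X := Finset.eq_of_subset_of_card_le hIX (le_of_eq hcard.symm)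
        rw [← h3]
        exact Finset.inter_subset_left
      have : insert e X = Y := by
        apply Finset.eq_of_subset_of_card_le
        · intro a ha
          rcases Finset.mem_insert.mp ha with rfl | ha
          · exact heY
          · exact hXsub ha
        · rw [Finset.card_insert_of_notMem heX]; omega
      exact this ▸ hY
    · -- pick u ∈ Y \ X with u ≠ e
      obtain ⟨u, hu, hue⟩ : ∃ u ∈ Y \ X, u ≠ e := by
        by_contra hcon
        push_neg at hcon
        exact hsub fun a ha => Finset.mem_singleton.mpr (hcon a ha)
      obtain ⟨huY, huX⟩ := Finset.mem_sdiff.mp hu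
      have huYX : u ∈ Y ∆ X := Finset.mem_symmDiff.mpr (Or.inl ⟨huY, huX⟩)
      obtain ⟨v, hv, hvF⟩ := hex Y hY X hX u huYX
      rcases Finset.mem_symmDiff.mp hv with ⟨hvY, hvX⟩ | ⟨hvX, hvY⟩
      · -- v ∈ Y \ X : both subcases contradictory
        by_cases hvu : v = u
        · -- Y ∆ {u, u} = Y.erase u, a minimum set containing e
          subst hvu
          have heq : Y ∆ ({v, v} : Finset α) = Y.erase v := by
            ext a
            simp only [Finset.mem_symmDiff, Finset.mem_insert, Finset.mem_singleton,
              Finset.mem_erase]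
            constructor
            · rintro (⟨h1, h2⟩ | ⟨h1, h2⟩)
              · exact ⟨fun h => h2 (Or.inl h), h1⟩
              · rcases h1 with rfl | rfl <;> exact absurd hvY h2
            · rintro ⟨h1, h2⟩; exact Or.inl ⟨h2, by tauto⟩
          rw [heq] at hvF
          have hcY : (Y.erase v).card = minCard F := by
            rw [Finset.card_erase_of_mem hvY]; omega
          have : e ∈ Y.erase v := Finset.mem_erase.mpr ⟨fun h => hue h.symm, heY⟩
          exact absurd this (hrl _ (mem_Fmin.mpr ⟨hvF, hcY⟩))
        · -- Y ∆ {u, v} = Y \ {u, v}, too small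
          have heq : Y ∆ ({u, v} : Finset α) = Y \ {u, v} := by
            ext a
            simp only [Finset.mem_symmDiff, Finset.mem_insert, Finset.mem_singleton,
              Finset.mem_sdiff]
            constructor
            · rintro (⟨h1, h2⟩ | ⟨h1, h2⟩)
              · exact ⟨h1, h2⟩
              · rcases h1 with rfl | rfl <;> [exact absurd huY h2; exact absurd hvY h2]
            · rintro ⟨h1, h2⟩; exact Or.inl ⟨h1, h2⟩
          rw [heq] at hvF
          have hss : ({u, v} : Finset α) ⊆ Y := by
            intro a ha
            rcases Finset.mem_insert.mp ha with rfl | ha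
            · exact huY
            · exact Finset.mem_singleton.mp ha ▸ hvY
          have hc2 : ({u, v} : Finset α).card = 2 := by
            rw [Finset.card_insert_of_notMem (by simpa using fun h => hvu h.symm)]
            simp
          have hcY : (Y \ {u, v}).card = Y.card - 2 := by
            rw [Finset.card_sdiff_of_subset hss, hc2]
          have h2Y : 2 ≤ Y.card := hc2 ▸ Finset.card_le_card hss
          have := minCard_le hvF
          omega
      · -- v ∈ X \ Y : progress, recurse
        have hvu : v ≠ u := fun h => hvY (h ▸ huY)
        have hve : v ≠ e := fun h => heX (h ▸ hvX)
        have heq : Y ∆ ({u, v} : Finset α) = insert v (Y.erase u) := by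
          ext a
          simp only [Finset.mem_symmDiff, Finset.mem_insert, Finset.mem_singleton,
            Finset.mem_erase]
          constructor
          · rintro (⟨h1, h2⟩ | ⟨h1, h2⟩)
            · exact Or.inr ⟨by tauto, h1⟩
            · rcases h1 with rfl | rfl
              · exact absurd huY h2
              · exact Or.inl rfl
          · rintro (rfl | ⟨h1, h2⟩)
            · exact Or.inr ⟨Or.inr rfl, hvY⟩
            · exact Or.inl ⟨h2, fun h => by
                rcases h with rfl | rfl
                exacts [h1 rfl, hvY h2]⟩
        rw [heq] at hvF
        have hcY' : (insert v (Y.erase u)).card = minCard F + 1 := by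
          rw [Finset.card_insert_of_notMem (fun h => hvY (Finset.mem_erase.mp h).2),
            Finset.card_erase_of_mem huY]
          omega
        have heY' : e ∈ insert v (Y.erase u) :=
          Finset.mem_insert.mpr (Or.inr (Finset.mem_erase.mpr ⟨fun h => hue h.symm, heY⟩))
        have hsd : insert v (Y.erase u) \ X = (Y \ X).erase u := by
          ext a
          simp only [Finset.mem_sdiff, Finset.mem_insert, Finset.mem_erase]
          constructor
          · rintro ⟨rfl | ⟨h1, h2⟩, h3⟩
            · exact absurd hvX h3
            · exact ⟨h1, h2, h3⟩
          · rintro ⟨h1, h2, h3⟩; exact ⟨Or.inr ⟨h1, h2⟩, h3⟩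
        have hcard' : ((insert v (Y.erase u)) \ X).card ≤ n := by
          rw [hsd, Finset.card_erase_of_mem hu]
          omega
        exact ih _ hvF heY' hcY' hcard'

lemma singleton_symmDiff_of_notMem {e : α} {X : Finset α} (heX : e ∉ X) :
    ({e} : Finset α) ∆ X = insert e X := by
  ext a
  simp only [Finset.mem_symmDiff, Finset.mem_singleton, Finset.mem_insert]
  constructor
  · rintro (⟨rfl, _⟩ | ⟨h1, h2⟩)
    · exact Or.inl rfl
    · exact Or.inr h1
  · rintro (rfl | h)
    · exact Or.inl ⟨rfl, heX⟩
    · exact Or.inr ⟨h, fun hh => heX (hh ▸ h)⟩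

lemma singleton_symmDiff_of_mem {e : α} {W : Finset α} (heW : e ∈ W) :
    ({e} : Finset α) ∆ W = W.erase e := by
  ext a
  simp only [Finset.mem_symmDiff, Finset.mem_singleton, Finset.mem_erase]
  constructor
  · rintro (⟨rfl, h⟩ | ⟨h1, h2⟩)
    · exact absurd heW h
    · exact ⟨h2, h1⟩
  · rintro ⟨h1, h2⟩; exact Or.inr ⟨h2, h1⟩

/-- Every member of the twist by `{e}` has cardinality at least `minCard F`,
when `e` is a ribbon loop of `F`. -/
lemma twist_card_ge {F : Finset (Finset α)} {e : α} (hrl : IsRibbonLoop F e)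
    {W : Finset α} (hW : W ∈ twist F {e}) : minCard F ≤ W.card := by
  obtain ⟨Z, hZ, rfl⟩ := mem_twist.mp hW
  by_cases heZ : e ∈ Z
  · rw [singleton_symmDiff_of_mem heZ, Finset.card_erase_of_mem heZ]
    have := card_ge_of_ribbonLoop hrl hZ heZ
    omega
  · rw [singleton_symmDiff_of_notMem heZ, Finset.card_insert_of_notMem heZ]
    have := minCard_le hZ
    omega

/-- Let `D` be a delta-matroid with minimum feasible cardinality `r = minCard F` and let `e`
be a non-orientable ribbon loop.  For `X ⊆ E \ {e}`: `X` is a feasible set of cardinality `r`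
(a basis of `D_min`) iff `X ∪ {e}` is a feasible set of cardinality `r + 1`. -/
theorem basis_min_iff_insert_feasible (E : Finset α) (F : Finset (Finset α))
    (hD : IsDeltaMatroid E F) (e : α) (he : e ∈ E)
    (hne : IsNonorientableRibbonLoop F e) :
    ∀ X ⊆ E \ {e},
      (X ∈ F ∧ X.card = minCard F) ↔
        (insert e X ∈ F ∧ (insert e X).card = minCard F + 1) := by
  obtain ⟨hFne, _hsub, hex⟩ := hD
  obtain ⟨hrl, hrl'⟩ := hne
  intro X hXE
  have heX : e ∉ X := fun h => by
    have := hXE h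
    simp at this
  constructor
  · rintro ⟨hXF, hXc⟩
    have hIc : (insert e X).card = minCard F + 1 := by
      rw [Finset.card_insert_of_notMem heX, hXc]
    -- `insert e X` belongs to the twist
    have hXe' : insert e X ∈ twist F {e} :=
      mem_twist.mpr ⟨X, hXF, singleton_symmDiff_of_notMem heX⟩
    -- the twist is nonempty
    have hFne' : (twist F {e}).Nonempty := ⟨insert e X, hXe'⟩
    -- minCard of the twist equals minCard F
    have hge : minCard F ≤ minCard (twist F {e}) := by
      obtain ⟨M', hM', hM'c⟩ := exists_minCard hFne'
      rw [← hM'c]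
      exact twist_card_ge hrl hM'
    have hle : minCard (twist F {e}) ≤ minCard F := by
      by_contra hcon
      push_neg at hcon
      have h1 := minCard_le hXe'
      have h2 : (insert e X).card = minCard (twist F {e}) := by omega
      exact hrl' _ (mem_Fmin.mpr ⟨hXe', h2⟩) (Finset.mem_insert_self e X)
    have hmc : minCard (twist F {e}) = minCard F := le_antisymm hle hge
    -- obtain a minimum set of the twist; it avoids `e`
    obtain ⟨M', hM', hM'c⟩ := exists_minCard hFne'
    have heM' : e ∉ M' := hrl' M' (mem_Fmin.mpr ⟨hM', hM'c⟩)
    obtain ⟨Z, hZ, hZeq⟩ := mem_twist.mp hM'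
    have heZ : e ∈ Z := by
      by_contra hcon
      rw [singleton_symmDiff_of_notMem hcon] at hZeq
      exact heM' (hZeq ▸ Finset.mem_insert_self e Z)
    have hZc : Z.card = minCard F + 1 := by
      rw [singleton_symmDiff_of_mem heZ] at hZeq
      have := Finset.card_erase_of_mem heZ
      rw [hZeq] at this
      have h1 := Finset.card_pos.mpr ⟨e, heZ⟩
      omega
    exact ⟨insert_mem_of_min hex hrl hXF hXc heX (Z \ X).card Z hZ heZ hZc le_rfl, hIc⟩
  · rintro ⟨hIF, hIc⟩
    have hXc : X.card = minCard F := by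
      rw [Finset.card_insert_of_notMem heX] at hIc
      omega
    -- X belongs to the twist
    have hXF' : X ∈ twist F {e} := by
      refine mem_twist.mpr ⟨insert e X, hIF, ?_⟩
      rw [singleton_symmDiff_of_mem (Finset.mem_insert_self e X),
        Finset.erase_insert heX]
    have hFne' : (twist F {e}).Nonempty := ⟨X, hXF'⟩
    have hmc : minCard (twist F {e}) = minCard F := by
      have h1 := minCard_le hXF'
      obtain ⟨M', hM', hM'c⟩ := exists_minCard hFne'
      have h2 := twist_card_ge hrl hM'
      omega
    -- a minimum set of F, inserted with e, is feasible in the twist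
    obtain ⟨M, hM, hMc⟩ := exists_minCard hFne
    have heM : e ∉ M := hrl M (mem_Fmin.mpr ⟨hM, hMc⟩)
    have hY' : insert e M ∈ twist F {e} :=
      mem_twist.mpr ⟨M, hM, singleton_symmDiff_of_notMem heM⟩
    have hY'c : (insert e M).card = minCard (twist F {e}) + 1 := by
      rw [Finset.card_insert_of_notMem heM, hMc, hmc]
    have hXc' : X.card = minCard (twist F {e}) := by rw [hmc, hXc]
    have hkey : insert e X ∈ twist F {e} :=
      insert_mem_of_min (exch_twist hex {e}) hrl' hXF' hXc' heX
        ((insert e M) \ X).card (insert e M) hY' (Finset.mem_insert_self e M) hY'c le_rfl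
    obtain ⟨Z, hZ, hZeq⟩ := mem_twist.mp hkey
    have hZX : Z = X := by
      have := congrArg (fun W => ({e} : Finset α) ∆ W) hZeq
      rw [symmDiff_symmDiff_cancel_left] at this
      rw [this, singleton_symmDiff_of_mem (Finset.mem_insert_self e X),
        Finset.erase_insert heX]
    exact ⟨hZX ▸ hZ, hXc⟩

end DeltaMatroid

end
end
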